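/- For every integer k ≥ 2 and any two distinct complex roots ζ₁, ζ₂ of A(x) = x^k - x^{k-1} - ... - 1, Re(ζ₁) < Re(ζ₂) holds if and only if |ζ₁| < |ζ₂|. -/

import Mathlib

open Polynomial Finset

/-! Multiplying by `X - 1` turns `X ^ k - ∑_{j<k} X ^ j` into `X ^ k (2 - X) - 1`,
so every root satisfies `|ζ|^k |2 - ζ| = 1`. Squaring, `|2 - ζ|² = 4 - 4 Re ζ + |ζ|²` gives
`4 Re ζ = 4 + |ζ|² - |ζ|^(-2k)`: the real part of a root is a strictly increasing function of
its modulus. -/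

theorem pow_mul_two_sub_eq_one_of_isRoot {R : Type*} [CommRing R] {k : ℕ} {ζ : R}
    (h : ((X : R[X]) ^ k - ∑ j ∈ range k, X ^ j).IsRoot ζ) : ζ ^ k * (2 - ζ) = 1 := by
  simp only [IsRoot, eval_sub, eval_pow, eval_X, eval_finsetSum] at h
  linear_combination (1 - ζ) * h - geom_sum_mul ζ k

theorem ne_zero_of_pow_mul_two_sub_eq_one {R : Type*} [Ring R] [Nontrivial R] {k : ℕ} {ζ : R}
    (h : ζ ^ k * (2 - ζ) = 1) : ζ ≠ 0 := by
  rintro rfl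
  cases k with
  | zero => simp [one_add_one_eq_two.symm] at h
  | succ k => simp at h

theorem Complex.four_mul_re_eq_of_pow_mul_two_sub_eq_one {k : ℕ} {ζ : ℂ}
    (h : ζ ^ k * (2 - ζ) = 1) : 4 * ζ.re = 4 + (‖ζ‖ ^ 2 - (‖ζ‖ ^ (2 * k))⁻¹) := by
  have hnorm : ‖ζ‖ ^ k * ‖2 - ζ‖ = 1 := by rw [← norm_pow, ← norm_mul, h, norm_one]
  have hsq : ‖2 - ζ‖ ^ 2 = 4 - 4 * ζ.re + ‖ζ‖ ^ 2 := by
    rw [Complex.sq_norm, Complex.normSq_apply, Complex.sub_re, Complex.sub_im, Complex.re_ofNat,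
      Complex.im_ofNat, Complex.sq_norm, Complex.normSq_apply]
    ring
  have hinv : ‖2 - ζ‖ ^ 2 = (‖ζ‖ ^ (2 * k))⁻¹ := by
    rw [eq_inv_of_mul_eq_one_right hnorm, inv_pow, ← pow_mul, mul_comm k 2]
  linarith

theorem strictMonoOn_sq_sub_inv_pow (n : ℕ) :
    StrictMonoOn (fun r : ℝ => r ^ 2 - (r ^ n)⁻¹) (Set.Ioi 0) := by
  intro a ha b _ hab
  have hsq : a ^ 2 < b ^ 2 := pow_lt_pow_left₀ hab (le_of_lt ha) two_ne_zero
  have hinv : (b ^ n)⁻¹ ≤ (a ^ n)⁻¹ :=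
    inv_anti₀ (pow_pos ha n) (pow_le_pow_left₀ (le_of_lt ha) hab.le n)
  show a ^ 2 - (a ^ n)⁻¹ < b ^ 2 - (b ^ n)⁻¹
  linarith

theorem stmt_9 (k : ℕ) (ζ₁ ζ₂ : ℂ)
    (h₁ : ((X : Polynomial ℂ) ^ k - ∑ j ∈ range k, X ^ j).IsRoot ζ₁)
    (h₂ : ((X : Polynomial ℂ) ^ k - ∑ j ∈ range k, X ^ j).IsRoot ζ₂) :
    ζ₁.re < ζ₂.re ↔ ‖ζ₁‖ < ‖ζ₂‖ := by
  have e₁ := pow_mul_two_sub_eq_one_of_isRoot h₁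
  have e₂ := pow_mul_two_sub_eq_one_of_isRoot h₂
  have hre₁ := Complex.four_mul_re_eq_of_pow_mul_two_sub_eq_one e₁
  have hre₂ := Complex.four_mul_re_eq_of_pow_mul_two_sub_eq_one e₂
  rw [← (strictMonoOn_sq_sub_inv_pow (2 * k)).lt_iff_lt
    (norm_pos_iff.mpr (ne_zero_of_pow_mul_two_sub_eq_one e₁))
    (norm_pos_iff.mpr (ne_zero_of_pow_mul_two_sub_eq_one e₂))]
  constructor <;> intro h <;> linarith
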